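/- Fix ε, t, Δ > 0 and define for α ∈ (0, √(2t/Δ − 1)) the function B(α) = 1 − [Φ(√(ε/2)(α + 1/α)) − Φ(√(ε/2)(−α + 1/α))] / (2Φ(t√(2ε)/(αΔ)) − 1), where Φ is the standard normal CDF. Then B is strictly decreasing on (0, √(2t/Δ − 1)). -/

import Mathlib

/-
With `K = t√(2ε)/Δ`, the denominator `2Φ(K/α) - 1` is positive and decreasing in `α`, so it
suffices that the numerator `Φ(c(α + 1/α)) - Φ(c(1/α - α))`, the standard normal mass of an
interval centred at `c/α` of half-width `cα`, is positive and increasing. Its derivative is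
`c (φ(u) (1 - α⁻²) + φ(v) (1 + α⁻²))` with `u = c(α + 1/α)`, `v = c(1/α - α)`, and since
`|v| ≤ |u|` we have `φ(u) ≤ φ(v)`, which makes it at least `c (φ(u) + φ(v)) > 0`.
-/

open Real

/-- Standard normal CDF. -/
noncomputable def Phi (x : ℝ) : ℝ :=
  ∫ u in Set.Iic x, Real.exp (-(u ^ 2) / 2) / Real.sqrt (2 * π)

open MeasureTheory Set ProbabilityTheory

local notation "φ" => gaussianPDFReal 0 1

lemma continuous_gaussianPDFReal (μ : ℝ) (v : NNReal) : Continuous (gaussianPDFReal μ v) := by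
  unfold gaussianPDFReal
  fun_prop

lemma gaussianPDFReal_zero_neg (v : NNReal) (x : ℝ) :
    gaussianPDFReal 0 v (-x) = gaussianPDFReal 0 v x := by
  simp [gaussianPDFReal]

lemma gaussianPDFReal_zero_le_of_sq_le (v : NNReal) {a b : ℝ} (h : a ^ 2 ≤ b ^ 2) :
    gaussianPDFReal 0 v b ≤ gaussianPDFReal 0 v a := by
  simp only [gaussianPDFReal, sub_zero]
  gcongr

lemma Phi_eq_setIntegral_gaussianPDFReal (x : ℝ) : Phi x = ∫ u in Iic x, φ u := by
  unfold Phi gaussianPDFReal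
  congr with u
  simp only [sub_zero, NNReal.coe_one, mul_one]
  ring

lemma Phi_sub_Phi (a b : ℝ) : Phi b - Phi a = ∫ u in a..b, φ u := by
  simp only [Phi_eq_setIntegral_gaussianPDFReal]
  exact intervalIntegral.integral_Iic_sub_Iic (integrable_gaussianPDFReal 0 1).integrableOn
    (integrable_gaussianPDFReal 0 1).integrableOn

lemma Phi_neg (x : ℝ) : Phi (-x) = 1 - Phi x := by
  have hsplit : (∫ u in Iic x, φ u) + ∫ u in Ioi x, φ u = 1 := by
    rw [intervalIntegral.integral_Iic_add_Ioi (integrable_gaussianPDFReal 0 1).integrableOn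
      (integrable_gaussianPDFReal 0 1).integrableOn, integral_gaussianPDFReal_eq_one 0 one_ne_zero]
  have hreflect : ∫ u in Ioi x, φ u = ∫ u in Iic (-x), φ u := by
    simp only [← integral_comp_neg_Ioi, gaussianPDFReal_zero_neg]
  rw [Phi_eq_setIntegral_gaussianPDFReal, Phi_eq_setIntegral_gaussianPDFReal, ← hreflect]
  linarith

lemma hasDerivAt_Phi (x : ℝ) : HasDerivAt Phi (φ x) x := by
  have hPhi : Phi = fun y => Phi 0 + ∫ u in (0 : ℝ)..y, φ u := by
    funext y
    rw [← Phi_sub_Phi]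
    ring
  rw [hPhi]
  exact ((continuous_gaussianPDFReal 0 1).integral_hasStrictDerivAt 0 x).hasDerivAt.const_add _

lemma Phi_strictMono : StrictMono Phi := fun a b hab => by
  have hpos : 0 < ∫ u in a..b, φ u :=
    intervalIntegral.intervalIntegral_pos_of_pos
      (integrable_gaussianPDFReal 0 1).intervalIntegrable
      (fun u => gaussianPDFReal_pos 0 1 u one_ne_zero) hab
  linarith [Phi_sub_Phi a b]

lemma two_mul_Phi_sub_one_pos {x : ℝ} (hx : 0 < x) : 0 < 2 * Phi x - 1 := by
  linarith [Phi_strictMono (neg_lt_self hx), Phi_neg x]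

lemma hasDerivAt_Phi_window (c : ℝ) {x : ℝ} (hx : x ≠ 0) :
    HasDerivAt (fun α => Phi (c * (α + 1 / α)) - Phi (c * (-α + 1 / α)))
      (c * (φ (c * (x + 1 / x)) * (1 - (x ^ 2)⁻¹) + φ (c * (-x + 1 / x)) * (1 + (x ^ 2)⁻¹))) x := by
  have hinv : HasDerivAt (fun α : ℝ => 1 / α) (-(x ^ 2)⁻¹) x := by
    simpa only [one_div] using hasDerivAt_inv hx
  have hu := (hasDerivAt_Phi (c * (x + 1 / x))).comp x
    (((hasDerivAt_id' x).add hinv).const_mul c)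
  have hv := (hasDerivAt_Phi (c * (-x + 1 / x))).comp x
    (((hasDerivAt_id' x).neg.add hinv).const_mul c)
  exact (hu.sub hv).congr_deriv (by ring)

lemma Phi_window_strictMonoOn {c : ℝ} (hc : 0 < c) :
    StrictMonoOn (fun α => Phi (c * (α + 1 / α)) - Phi (c * (-α + 1 / α))) (Ioi 0) := by
  refine strictMonoOn_of_hasDerivWithinAt_pos (convex_Ioi 0)
    (fun x hx => (hasDerivAt_Phi_window c (ne_of_gt hx)).continuousAt.continuousWithinAt)
    (fun x hx => (hasDerivAt_Phi_window c (ne_of_gt (interior_subset hx))).hasDerivWithinAt)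
    fun x hx => ?_
  rw [interior_Ioi] at hx
  have hx : 0 < x := hx
  have hφ : φ (c * (x + 1 / x)) ≤ φ (c * (-x + 1 / x)) := by
    apply gaussianPDFReal_zero_le_of_sq_le
    have : x * (1 / x) = 1 := mul_one_div_cancel hx.ne'
    nlinarith [sq_nonneg c]
  have hu := gaussianPDFReal_pos 0 1 (c * (x + 1 / x)) one_ne_zero
  have hv := gaussianPDFReal_pos 0 1 (c * (-x + 1 / x)) one_ne_zero
  have hs : 0 < (x ^ 2)⁻¹ := by positivity
  have : 0 < φ (c * (x + 1 / x)) * (1 - (x ^ 2)⁻¹) + φ (c * (-x + 1 / x)) * (1 + (x ^ 2)⁻¹) := by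
    nlinarith
  positivity

lemma Phi_window_pos {c x : ℝ} (hc : 0 < c) (hx : 0 < x) :
    0 < Phi (c * (x + 1 / x)) - Phi (c * (-x + 1 / x)) :=
  sub_pos.2 (Phi_strictMono (by gcongr; linarith))

theorem B_strictAntiOn_general (ε t Δ : ℝ) (hε : 0 < ε) (ht : 0 < t) (hΔ : 0 < Δ) :
    StrictAntiOn
      (fun α : ℝ =>
        1 - (Phi (Real.sqrt (ε / 2) * (α + 1 / α))
              - Phi (Real.sqrt (ε / 2) * (-α + 1 / α)))
            / (2 * Phi (t * Real.sqrt (2 * ε) / (α * Δ)) - 1))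
      (Set.Ioo 0 (Real.sqrt (2 * t / Δ - 1))) := by
  rintro a ⟨ha, -⟩ b ⟨hb, -⟩ hab
  have hc : 0 < √(ε / 2) := by positivity
  have hnum := Phi_window_strictMonoOn hc ha hb hab
  have hden_pos : 0 < 2 * Phi (t * √(2 * ε) / (b * Δ)) - 1 :=
    two_mul_Phi_sub_one_pos (by positivity)
  have hden_le : Phi (t * √(2 * ε) / (b * Δ)) ≤ Phi (t * √(2 * ε) / (a * Δ)) :=
    Phi_strictMono.monotone (by gcongr)
  exact sub_lt_sub_left (div_lt_div₀ hnum (by linarith) (Phi_window_pos hc hb).le hden_pos) 1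

/-- The failure-probability function `B(α)` of the truncated Gaussian mechanism
is strictly decreasing on `(0, √(2t/Δ − 1))`. -/
theorem B_strictAntiOn (ε t Δ : ℝ) (hε : 0 < ε) (ht : 0 < t) (hΔ : 0 < Δ)
    (htΔ : Δ / 2 < t) :
    StrictAntiOn
      (fun α : ℝ =>
        1 - (Phi (Real.sqrt (ε / 2) * (α + 1 / α))
              - Phi (Real.sqrt (ε / 2) * (-α + 1 / α)))
            / (2 * Phi (t * Real.sqrt (2 * ε) / (α * Δ)) - 1))
      (Set.Ioo 0 (Real.sqrt (2 * t / Δ - 1))) :=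
  B_strictAntiOn_general ε t Δ hε ht hΔ
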